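/- In a finite episodic MDP with horizon H, suppose policies π*, π̂, π_ref satisfy: (i) state coverage d_h^{π*}(s) ≤ C_S · d_h^{π_ref}(s) for all h, s; (ii) action coverage π(a|s) ≤ C_A · π_ref(a|s) for π ∈ {π*, π̂}; (iii) for every h, E_{s∼d_h^{π_ref}, a∼π_ref}[(β·log(π̂(a|s)/π_ref(a|s)) − Q_h^{π̂}(s,a) − c_h(s))²] ≤ ε/2, where c_h(s) = E_{a∼π_ref(·|s)}[β·log(π̂(a|s)/π_ref(a|s)) − Q_h^{π̂}(s,a)]. Then J(π*) − J(π̂) ≤ 2H·sqrt(C_S·C_A·ε/2) + β·H·log C_A. -/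
import Mathlib


open Finset

/-- A finite-horizon episodic MDP with deterministic transitions, state-dependent
reward, and an initial state distribution. -/
structure FinMDP (S A : Type) [Fintype S] [Fintype A] (H : ℕ) where
  r : S → ℝ
  step : ℕ → S → A → S
  d0 : S → ℝ
  d0_nonneg : ∀ s, 0 ≤ d0 s
  d0_sum : ∑ s, d0 s = 1

variable {S A : Type} [Fintype S] [Fintype A] {H : ℕ}

/-- `π h s a` is the probability of action `a` in state `s` at step `h`. -/
def IsPolicy (π : ℕ → S → A → ℝ) : Prop :=
  (∀ h s a, 0 ≤ π h s a) ∧ (∀ h s, ∑ a, π h s a = 1)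

/-- Value with `n` remaining steps (so step index is `H - n`):
expected sum of rewards `r(s_t)` for the remaining steps. -/
noncomputable def Vfrom (M : FinMDP S A H) (π : ℕ → S → A → ℝ) : ℕ → S → ℝ
  | 0, _ => 0
  | n + 1, s =>
      M.r s + ∑ a, π (H - (n + 1)) s a * Vfrom M π n (M.step (H - (n + 1)) s a)

/-- The value function `V_h^π(s)`. -/
noncomputable def Vh (M : FinMDP S A H) (π : ℕ → S → A → ℝ) (h : ℕ) (s : S) : ℝ :=
  Vfrom M π (H - h) s

/-- The action-value function `Q_h^π(s,a)`. -/
noncomputable def Qh (M : FinMDP S A H) (π : ℕ → S → A → ℝ) (h : ℕ) (s : S) (a : A) : ℝ :=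
  M.r s + Vfrom M π (H - (h + 1)) (M.step h s a)

/-- The state distribution `d_h^π` at step `h` induced by policy `π`. -/
noncomputable def dstate [DecidableEq S] (M : FinMDP S A H) (π : ℕ → S → A → ℝ) :
    ℕ → S → ℝ
  | 0 => M.d0
  | h + 1 => fun s' =>
      ∑ s, ∑ a, dstate M π h s * π h s a * (if M.step h s a = s' then 1 else 0)

/-- The expected return `J(π)`. -/
noncomputable def Jret (M : FinMDP S A H) (π : ℕ → S → A → ℝ) : ℝ :=
  ∑ s, M.d0 s * Vh M π 0 s


/-- The centering constant `c_h(s) = E_{a∼π_ref(·|s)}[β·log(π̂(a|s)/π_ref(a|s)) − Q_h^{π̂}(s,a)]`. -/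
noncomputable def creg (M : FinMDP S A H) (πhat πref : ℕ → S → A → ℝ) (β : ℝ)
    (h : ℕ) (s : S) : ℝ :=
  ∑ a, πref h s a * (β * Real.log (πhat h s a / πref h s a) - Qh M πhat h s a)

-- ===== auxiliary lemmas =====

lemma dstate_nonneg [DecidableEq S] (M : FinMDP S A H) {π : ℕ → S → A → ℝ}
    (hπ : IsPolicy π) : ∀ h s, 0 ≤ dstate M π h s := by
  intro h
  induction h with
  | zero => exact M.d0_nonneg
  | succ h ih =>
    intro s'
    simp only [dstate]
    apply Finset.sum_nonneg; intro s _
    apply Finset.sum_nonneg; intro a _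
    apply mul_nonneg (mul_nonneg (ih s) (hπ.1 h s a))
    split <;> norm_num

lemma dstate_sum_one [DecidableEq S] (M : FinMDP S A H) {π : ℕ → S → A → ℝ}
    (hπ : IsPolicy π) : ∀ h, ∑ s, dstate M π h s = 1 := by
  intro h
  induction h with
  | zero => exact M.d0_sum
  | succ h ih =>
    simp only [dstate]
    rw [Finset.sum_comm]
    have : ∀ s ∈ (univ : Finset S),
        ∑ s' : S, ∑ a, dstate M π h s * π h s a * (if M.step h s a = s' then 1 else 0)
        = dstate M π h s := by
      intro s _
      rw [Finset.sum_comm]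
      have : ∀ a ∈ (univ : Finset A),
          ∑ s' : S, dstate M π h s * π h s a * (if M.step h s a = s' then 1 else 0)
          = dstate M π h s * π h s a := by
        intro a _; simp
      rw [Finset.sum_congr rfl this, ← Finset.mul_sum, hπ.2 h s, mul_one]
    rw [Finset.sum_congr rfl this, ih]

lemma dstate_push [DecidableEq S] (M : FinMDP S A H) (π : ℕ → S → A → ℝ) (h : ℕ)
    (X : S → ℝ) :
    ∑ s', dstate M π (h+1) s' * X s' =
    ∑ s, dstate M π h s * ∑ a, π h s a * X (M.step h s a) := by
  simp only [dstate, Finset.sum_mul]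
  rw [Finset.sum_comm]
  refine Finset.sum_congr rfl fun s _ => ?_
  rw [Finset.sum_comm, Finset.mul_sum]
  refine Finset.sum_congr rfl fun a _ => ?_
  simp [mul_ite, ite_mul, mul_assoc]

lemma Vh_bellman [DecidableEq S] (M : FinMDP S A H) {π : ℕ → S → A → ℝ}
    (hπ : IsPolicy π) {h : ℕ} (hh : h < H) (s : S) :
    Vh M π h s = ∑ a, π h s a * Qh M π h s a := by
  have h1 : H - h = (H - (h+1)) + 1 := by omega
  have h2 : H - ((H - (h+1)) + 1) = h := by omega
  unfold Vh Qh
  rw [h1]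
  show M.r s + ∑ a, π (H - (H - (h+1) + 1)) s a *
      Vfrom M π (H - (h+1)) (M.step (H - (H - (h+1) + 1)) s a) = _
  rw [h2]
  have : ∑ a, π h s a * (M.r s + Vfrom M π (H - (h+1)) (M.step h s a))
      = M.r s + ∑ a, π h s a * Vfrom M π (H - (h+1)) (M.step h s a) := by
    simp [mul_add, Finset.sum_add_distrib, ← Finset.sum_mul, hπ.2 h s]
  rw [this]

lemma step_eq [DecidableEq S] (M : FinMDP S A H) {π : ℕ → S → A → ℝ}
    (σ : ℕ → S → A → ℝ) (hπ : IsPolicy π) (h : ℕ) :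
    ∑ s, dstate M π h s * ∑ a, π h s a * Qh M σ h s a
      = (∑ s, dstate M π h s * M.r s)
        + ∑ s, dstate M π (h+1) s * Vh M σ (h+1) s := by
  rw [dstate_push M π h (Vh M σ (h+1)), ← Finset.sum_add_distrib]
  refine Finset.sum_congr rfl fun s _ => ?_
  have hq : ∀ a, Qh M σ h s a = M.r s + Vh M σ (h+1) (M.step h s a) := fun a => rfl
  have : ∑ a, π h s a * Qh M σ h s a
      = M.r s + ∑ a, π h s a * Vh M σ (h+1) (M.step h s a) := by
    simp [hq, mul_add, Finset.sum_add_distrib, ← Finset.sum_mul, hπ.2 h s]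
  rw [this, mul_add]

lemma Vh_top [DecidableEq S] (M : FinMDP S A H) (π : ℕ → S → A → ℝ) (s : S) :
    Vh M π H s = 0 := by
  unfold Vh
  rw [Nat.sub_self]
  rfl

lemma J_eq [DecidableEq S] (M : FinMDP S A H) {π : ℕ → S → A → ℝ} (hπ : IsPolicy π) :
    Jret M π = ∑ h ∈ Finset.range H, ∑ s, dstate M π h s * M.r s := by
  set F : ℕ → ℝ := fun h => ∑ s, dstate M π h s * Vh M π h s with hF
  have hstep : ∀ h ∈ Finset.range H,
      ∑ s, dstate M π h s * M.r s = F h - F (h+1) := by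
    intro h hh
    rw [Finset.mem_range] at hh
    have : F h = (∑ s, dstate M π h s * M.r s) + F (h+1) := by
      simp only [hF]
      rw [← step_eq M π hπ h]
      refine Finset.sum_congr rfl fun s _ => ?_
      rw [Vh_bellman M hπ hh s]
    rw [this]; ring
  rw [Finset.sum_congr rfl hstep, Finset.sum_range_sub' F H]
  have hFH : F H = 0 := by
    simp only [hF]
    simp [Vh_top]
  have hF0 : F 0 = Jret M π := by
    simp only [hF, Jret]
    rfl
  rw [hFH, hF0, sub_zero]

lemma pdl [DecidableEq S] (M : FinMDP S A H) {π σ : ℕ → S → A → ℝ}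
    (hπ : IsPolicy π) (hσ : IsPolicy σ) :
    Jret M π - Jret M σ =
      ∑ h ∈ Finset.range H, ∑ s, dstate M π h s *
        (∑ a, π h s a * Qh M σ h s a - Vh M σ h s) := by
  set D : ℕ → ℝ := fun h => ∑ s, dstate M π h s * Vh M σ h s with hD
  have hterm : ∀ h ∈ Finset.range H,
      ∑ s, dstate M π h s * (∑ a, π h s a * Qh M σ h s a - Vh M σ h s)
      = (∑ s, dstate M π h s * M.r s) + (D (h+1) - D h) := by
    intro h _
    simp only [mul_sub, Finset.sum_sub_distrib]
    rw [step_eq M σ hπ h]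
    simp only [hD]; ring
  rw [Finset.sum_congr rfl hterm, Finset.sum_add_distrib, Finset.sum_range_sub D H,
    ← J_eq M hπ]
  have hDH : D H = 0 := by simp only [hD]; simp [Vh_top]
  have hD0 : D 0 = Jret M σ := by simp only [hD, Jret]; rfl
  rw [hDH, hD0]; ring

lemma weighted_cs {ι : Type*} [Fintype ι] (w g : ι → ℝ) (hw : ∀ i, 0 ≤ w i)
    (hsum : ∑ i, w i = 1) : (∑ i, w i * g i)^2 ≤ ∑ i, w i * g i ^ 2 := by
  have h := Finset.sum_mul_sq_le_sq_mul_sq Finset.univ (fun i => Real.sqrt (w i))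
    (fun i => Real.sqrt (w i) * g i)
  calc (∑ i, w i * g i)^2
      = (∑ i, Real.sqrt (w i) * (Real.sqrt (w i) * g i))^2 := by
        congr 1
        refine Finset.sum_congr rfl fun i _ => ?_
        rw [← mul_assoc, Real.mul_self_sqrt (hw i)]
    _ ≤ (∑ i, Real.sqrt (w i)^2) * ∑ i, (Real.sqrt (w i) * g i)^2 := h
    _ = ∑ i, w i * g i ^ 2 := by
        have e1 : ∑ i, Real.sqrt (w i)^2 = 1 := by
          rw [← hsum]; exact Finset.sum_congr rfl fun i _ => Real.sq_sqrt (hw i)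
        have e2 : ∀ i ∈ (univ : Finset ι), (Real.sqrt (w i) * g i)^2 = w i * g i ^2 := by
          intro i _; rw [mul_pow, Real.sq_sqrt (hw i)]
        rw [e1, one_mul, Finset.sum_congr rfl e2]

lemma kl_nonneg {ι : Type*} [Fintype ι] (p q : ι → ℝ) (hp : ∀ i, 0 < p i)
    (hq : ∀ i, 0 < q i) (hps : ∑ i, p i = 1) (hqs : ∑ i, q i = 1) :
    0 ≤ ∑ i, p i * Real.log (p i / q i) := by
  have key : ∀ i ∈ (univ : Finset ι), p i - q i ≤ p i * Real.log (p i / q i) := by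
    intro i _
    have hlog := Real.log_le_sub_one_of_pos (div_pos (hq i) (hp i))
    have hneg : Real.log (p i / q i) = - Real.log (q i / p i) := by
      rw [← Real.log_inv, inv_div]
    have hd : q i / p i * p i = q i := div_mul_cancel₀ _ (ne_of_gt (hp i))
    rw [hneg]
    nlinarith [hp i]
  have := Finset.sum_le_sum key
  rw [Finset.sum_sub_distrib, hps, hqs] at this
  linarith

/-- Main performance guarantee of DPSDP: under state and action coverage and the
in-distribution reward learning error bound, the regret of `π̂` against `π*` is at most
`2H·sqrt(C_S·C_A·ε/2) + β·H·log C_A`. -/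
theorem dpsdp_performance_guarantee [DecidableEq S]
    (M : FinMDP S A H) (πstar πhat πref : ℕ → S → A → ℝ)
    (hπstar : IsPolicy πstar) (hπhat : IsPolicy πhat) (hπref : IsPolicy πref)
    (href_pos : ∀ h s a, 0 < πref h s a) (hhat_pos : ∀ h s a, 0 < πhat h s a)
    (CS CA β ε : ℝ) (hβ : 0 < β) (hCA : 1 ≤ CA) (hε : 0 ≤ ε)
    (cov_state : ∀ h s, dstate M πstar h s ≤ CS * dstate M πref h s)
    (cov_act_star : ∀ h s a, πstar h s a ≤ CA * πref h s a)
    (cov_act_hat : ∀ h s a, πhat h s a ≤ CA * πref h s a)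
    (hreg : ∀ h, h < H → ∑ s, dstate M πref h s * ∑ a, πref h s a *
        (β * Real.log (πhat h s a / πref h s a) - Qh M πhat h s a
          - creg M πhat πref β h s) ^ 2 ≤ ε / 2) :
    Jret M πstar - Jret M πhat ≤
      2 * H * Real.sqrt (CS * CA * ε / 2) + β * H * Real.log CA := by
  have hCA0 : (0:ℝ) < CA := lt_of_lt_of_le one_pos hCA
  -- CS ≥ 1
  have hCS1 : (1:ℝ) ≤ CS := by
    have hex : ∃ s, 0 < M.d0 s := by
      by_contra hc
      push_neg at hc
      have : ∑ s, M.d0 s ≤ 0 := Finset.sum_nonpos (fun s _ => hc s)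
      rw [M.d0_sum] at this; linarith
    obtain ⟨s0, hs0⟩ := hex
    have h' : M.d0 s0 ≤ CS * M.d0 s0 := cov_state 0 s0
    nlinarith
  have hCS0 : (0:ℝ) < CS := lt_of_lt_of_le one_pos hCS1
  have hlogCA : 0 ≤ Real.log CA := Real.log_nonneg hCA
  set L : ℕ → S → A → ℝ := fun h s a => β * Real.log (πhat h s a / πref h s a) with hLdef
  set g : ℕ → S → A → ℝ := fun h s a =>
    β * Real.log (πhat h s a / πref h s a) - Qh M πhat h s a - creg M πhat πref β h s
    with hgdef
  -- per-step bound
  have hstep : ∀ h ∈ Finset.range H,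
      ∑ s, dstate M πstar h s * (∑ a, πstar h s a * Qh M πhat h s a - Vh M πhat h s)
      ≤ 2 * Real.sqrt (CS * CA * ε / 2) + β * Real.log CA := by
    intro h hhmem
    rw [Finset.mem_range] at hhmem
    -- pointwise decomposition
    have key : ∀ s ∈ (univ : Finset S),
        dstate M πstar h s * (∑ a, πstar h s a * Qh M πhat h s a - Vh M πhat h s)
        = dstate M πstar h s * (∑ a, πstar h s a * L h s a)
          - dstate M πstar h s * (∑ a, πhat h s a * L h s a)
          - dstate M πstar h s * (∑ a, πstar h s a * g h s a)
          + dstate M πstar h s * (∑ a, πhat h s a * g h s a) := by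
      intro s _
      rw [Vh_bellman M hπhat hhmem s]
      have e1 : ∀ (π : ℕ → S → A → ℝ), (∀ h s, ∑ a, π h s a = 1) →
          ∑ a, π h s a * Qh M πhat h s a
          = (∑ a, π h s a * L h s a) - (∑ a, π h s a * g h s a)
            - creg M πhat πref β h s := by
        intro π hπ1
        have e : ∀ a ∈ (univ : Finset A), π h s a * Qh M πhat h s a
            = π h s a * L h s a - π h s a * g h s a
              - π h s a * creg M πhat πref β h s := by
          intro a _
          simp only [hLdef, hgdef]
          ring
        rw [Finset.sum_congr rfl e]
        simp [Finset.sum_sub_distrib, ← Finset.sum_mul, hπ1 h s]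
      rw [e1 πstar hπstar.2, e1 πhat hπhat.2]
      ring
    rw [Finset.sum_congr rfl key]
    simp only [Finset.sum_add_distrib, Finset.sum_sub_distrib]
    -- Term 1 bound
    have hT1 : ∑ s, dstate M πstar h s * (∑ a, πstar h s a * L h s a)
        ≤ β * Real.log CA := by
      have hinner : ∀ s, ∑ a, πstar h s a * L h s a ≤ β * Real.log CA := by
        intro s
        have hL : ∀ a, L h s a ≤ β * Real.log CA := by
          intro a
          have hr : πhat h s a / πref h s a ≤ CA :=
            (div_le_iff₀ (href_pos h s a)).2 (by linarith [cov_act_hat h s a])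
          have := Real.log_le_log (div_pos (hhat_pos h s a) (href_pos h s a)) hr
          simp only [hLdef]
          exact mul_le_mul_of_nonneg_left this hβ.le
        calc ∑ a, πstar h s a * L h s a
            ≤ ∑ a, πstar h s a * (β * Real.log CA) :=
              Finset.sum_le_sum fun a _ =>
                mul_le_mul_of_nonneg_left (hL a) (hπstar.1 h s a)
          _ = β * Real.log CA := by rw [← Finset.sum_mul, hπstar.2 h s, one_mul]
      calc ∑ s, dstate M πstar h s * (∑ a, πstar h s a * L h s a)
          ≤ ∑ s, dstate M πstar h s * (β * Real.log CA) :=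
            Finset.sum_le_sum fun s _ =>
              mul_le_mul_of_nonneg_left (hinner s) (dstate_nonneg M hπstar h s)
        _ = β * Real.log CA := by
            rw [← Finset.sum_mul, dstate_sum_one M hπstar h, one_mul]
    -- Term 2 (KL) nonneg
    have hT2 : 0 ≤ ∑ s, dstate M πstar h s * (∑ a, πhat h s a * L h s a) := by
      apply Finset.sum_nonneg; intro s _
      apply mul_nonneg (dstate_nonneg M hπstar h s)
      have e : ∑ a, πhat h s a * L h s a
          = β * ∑ a, πhat h s a * Real.log (πhat h s a / πref h s a) := by
        rw [Finset.mul_sum]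
        refine Finset.sum_congr rfl fun a _ => ?_
        simp only [hLdef]; ring
      rw [e]
      exact mul_nonneg hβ.le
        (kl_nonneg (fun a => πhat h s a) (fun a => πref h s a)
          (hhat_pos h s) (href_pos h s) (hπhat.2 h s) (hπref.2 h s))
    -- Cauchy–Schwarz bound for the residual terms
    have habs : ∀ (π : ℕ → S → A → ℝ), IsPolicy π →
        (∀ h s a, π h s a ≤ CA * πref h s a) →
        |∑ s, dstate M πstar h s * ∑ a, π h s a * g h s a|
          ≤ Real.sqrt (CS * CA * ε / 2) := by
      intro π hπ hcov
      set w : S × A → ℝ := fun p => dstate M πstar h p.1 * π h p.1 p.2 with hwdef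
      set G : S × A → ℝ := fun p => g h p.1 p.2 with hGdef
      have hrw : ∑ s, dstate M πstar h s * ∑ a, π h s a * g h s a
          = ∑ p : S × A, w p * G p := by
        rw [Fintype.sum_prod_type]
        refine Finset.sum_congr rfl fun s _ => ?_
        rw [Finset.mul_sum]
        refine Finset.sum_congr rfl fun a _ => ?_
        simp only [hwdef, hGdef]; ring
      have hw0 : ∀ p, 0 ≤ w p := fun p =>
        mul_nonneg (dstate_nonneg M hπstar h p.1) (hπ.1 h p.1 p.2)
      have hws : ∑ p, w p = 1 := by
        rw [Fintype.sum_prod_type]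
        have e : ∀ s ∈ (univ : Finset S), ∑ a, w (s, a) = dstate M πstar h s := by
          intro s _
          simp only [hwdef]
          rw [← Finset.mul_sum, hπ.2 h s, mul_one]
        rw [Finset.sum_congr rfl e, dstate_sum_one M hπstar h]
      have hcs := weighted_cs w G hw0 hws
      have hbound : ∑ p : S × A, w p * G p ^ 2 ≤ CS * CA * ε / 2 := by
        have h1 : ∀ p ∈ (univ : Finset (S × A)), w p * G p ^2
            ≤ (CS * CA) * (dstate M πref h p.1 * (πref h p.1 p.2 * G p ^ 2)) := by
          intro p _
          have hd := cov_state h p.1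
          have hd0 := dstate_nonneg M hπstar h p.1
          have hc := hcov h p.1 p.2
          have hwle : w p ≤ (CS * dstate M πref h p.1) * (CA * πref h p.1 p.2) :=
            mul_le_mul hd hc (hπ.1 h p.1 p.2) (le_trans hd0 hd)
          have := mul_le_mul_of_nonneg_right hwle (sq_nonneg (G p))
          calc w p * G p ^ 2 ≤ (CS * dstate M πref h p.1) * (CA * πref h p.1 p.2) * G p ^2 := this
            _ = (CS * CA) * (dstate M πref h p.1 * (πref h p.1 p.2 * G p ^ 2)) := by ring
        calc ∑ p : S × A, w p * G p ^ 2
            ≤ ∑ p : S × A, (CS * CA) * (dstate M πref h p.1 * (πref h p.1 p.2 * G p ^ 2)) :=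
              Finset.sum_le_sum h1
          _ = (CS * CA) * ∑ s, dstate M πref h s * ∑ a, πref h s a * (g h s a) ^ 2 := by
              rw [← Finset.mul_sum, Fintype.sum_prod_type]
              congr 1
              refine Finset.sum_congr rfl fun s _ => ?_
              rw [Finset.mul_sum]
          _ ≤ (CS * CA) * (ε / 2) := by
              apply mul_le_mul_of_nonneg_left _ (by positivity)
              have := hreg h hhmem
              simpa only [hgdef] using this
          _ = CS * CA * ε / 2 := by ring
      rw [hrw]
      have hsq : (∑ p, w p * G p)^2 ≤ CS * CA * ε / 2 := le_trans hcs hbound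
      calc |∑ p, w p * G p| = Real.sqrt ((∑ p, w p * G p)^2) :=
            (Real.sqrt_sq_eq_abs _).symm
        _ ≤ Real.sqrt (CS * CA * ε / 2) := Real.sqrt_le_sqrt hsq
    have hstar := habs πstar hπstar cov_act_star
    have hhat := habs πhat hπhat cov_act_hat
    have h3 := abs_le.1 hstar
    have h4 := abs_le.1 hhat
    linarith [hT1, hT2, h3.1, h4.2]
  rw [pdl M hπstar hπhat]
  calc ∑ h ∈ Finset.range H, ∑ s, dstate M πstar h s *
        (∑ a, πstar h s a * Qh M πhat h s a - Vh M πhat h s)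
      ≤ ∑ _h ∈ Finset.range H,
          (2 * Real.sqrt (CS * CA * ε / 2) + β * Real.log CA) :=
        Finset.sum_le_sum hstep
    _ = H * (2 * Real.sqrt (CS * CA * ε / 2) + β * Real.log CA) := by
        rw [Finset.sum_const, Finset.card_range, nsmul_eq_mul]
    _ = 2 * H * Real.sqrt (CS * CA * ε / 2) + β * H * Real.log CA := by ring
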